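/- arXiv:1707.08038 — 2 statements merged into one kernel-verified Lean document; each statement's English description precedes it below -/
import Mathlib

section
/- Under the hypotheses of the preceding lemma with g(t) = ∫₀¹ d(x)·n(t,x)·p̃(t,x) dx for a continuous positive function d on [0,1], suppose additionally that n(t,x) > 0 for all (t,x) and p̃(T,x) = p⁰ < 0 for all x. Then g(t) < 0 for all t ∈ [0,T], and consequently, for any continuous nonnegative weight w with ∫₀¹ w(x)·n(t,x) dx > 0 for all t, the switching function Φ(t) = ∫₀¹ w(x)·n(t,x)·p̃(t,x) dx is strictly decreasing on [0,T] with Φ(T) < 0. -/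
/-!
Along the flow, `∂ₜ (n p̃) = F n p̃ + n (-F p̃ + g) = n g`, so every weighted integral
`t ↦ ∫ c n p̃` has derivative `(∫ c n) g`. For `c = d` this is the linear equation
`g' = (∫ d n) g`, whence `g t = g T · exp (-∫ₜᵀ ∫ d n) < 0` because
`g T = (∫ d n(T)) p⁰ < 0`. For `c = w` it gives `Φ' = (∫ w n) g < 0`, and `Φ T = (∫ w n(T)) p⁰`.
-/

open Set Filter Topology Real MeasureTheory intervalIntegral

theorem ContinuousOn.exists_continuous_eqOn_Icc {a b : ℝ} (hab : a ≤ b) {c : ℝ → ℝ}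
    (hc : ContinuousOn c (Icc a b)) : ∃ c' : ℝ → ℝ, Continuous c' ∧ EqOn c' c (Icc a b) :=
  ⟨IccExtend hab ((Icc a b).domRestrict c), hc.domRestrict.Icc_extend',
    fun _ hx => IccExtend_of_mem hab _ hx⟩

theorem continuous_intervalIntegral_weight_mul {a b : ℝ} (hab : a ≤ b) {c : ℝ → ℝ}
    (hc : ContinuousOn c (Icc a b)) {K : ℝ → ℝ → ℝ}
    (hK : Continuous fun q : ℝ × ℝ => K q.1 q.2) :
    Continuous fun t => ∫ x in a..b, c x * K t x := by
  obtain ⟨c', hc', hcc'⟩ := hc.exists_continuous_eqOn_Icc hab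
  have hK' : Continuous fun q : ℝ × ℝ => c' q.2 * K q.1 q.2 := (hc'.comp continuous_snd).mul hK
  refine (continuous_parametric_intervalIntegral_of_continuous' (μ := volume)
    (f := fun t x => c' x * K t x) hK' a b).congr fun t => integral_congr fun x hx => ?_
  simp only [hcc' (uIcc_of_le hab ▸ hx)]

theorem continuous_intervalIntegral_weight_mul_mul {a b : ℝ} (hab : a ≤ b) {c : ℝ → ℝ}
    (hc : ContinuousOn c (Icc a b)) {n p : ℝ → ℝ → ℝ}
    (hn : Continuous fun q : ℝ × ℝ => n q.1 q.2) (hp : Continuous fun q : ℝ × ℝ => p q.1 q.2) :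
    Continuous fun t => ∫ x in a..b, c x * n t x * p t x := by
  simpa only [mul_assoc] using
    continuous_intervalIntegral_weight_mul hab hc (K := fun t x => n t x * p t x) (hn.mul hp)

theorem hasDerivAt_intervalIntegral_of_continuous {K K' : ℝ → ℝ → ℝ} {a b t₀ : ℝ}
    (hK : Continuous fun q : ℝ × ℝ => K q.1 q.2)
    (hK' : Continuous fun q : ℝ × ℝ => K' q.1 q.2)
    (hdiff : ∀ᶠ t in 𝓝 t₀, ∀ x ∈ uIcc a b, HasDerivAt (K · x) (K' t x) t) :
    HasDerivAt (fun t => ∫ x in a..b, K t x) (∫ x in a..b, K' t₀ x) t₀ := by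
  obtain ⟨ε, hε, hball⟩ := Metric.eventually_nhds_iff_ball.1 hdiff
  have hcompact := (isCompact_closedBall t₀ (ε / 2)).prod (isCompact_uIcc (a := a) (b := b))
  obtain ⟨C, hC⟩ := (hcompact.image_of_continuousOn hK'.norm.continuousOn).bddAbove
  have hsub : Metric.ball t₀ (ε / 2) ⊆ Metric.ball t₀ ε := Metric.ball_subset_ball (by linarith)
  refine (hasDerivAt_integral_of_dominated_loc_of_deriv_le (μ := volume) (F := K) (F' := K')
    (bound := fun _ => C)
    (Metric.ball_mem_nhds t₀ (half_pos hε))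
    (Eventually.of_forall fun t => (hK.comp (Continuous.prodMk_right t)).aestronglyMeasurable)
    ((hK.comp (Continuous.prodMk_right t₀)).intervalIntegrable a b)
    (hK'.comp (Continuous.prodMk_right t₀)).aestronglyMeasurable
    (Eventually.of_forall fun x hx t ht => hC (mem_image_of_mem _
      (mk_mem_prod (Metric.ball_subset_closedBall ht) (uIoc_subset_uIcc hx))))
    intervalIntegrable_const
    (Eventually.of_forall fun x hx t ht => hball t (hsub ht) x (uIoc_subset_uIcc hx))).2

theorem hasDerivAt_intervalIntegral_weight_mul_mul {a b : ℝ} (hab : a ≤ b) {c : ℝ → ℝ}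
    (hc : ContinuousOn c (Icc a b)) {n p F : ℝ → ℝ → ℝ} {g : ℝ → ℝ} {U : Set ℝ} (hU : IsOpen U)
    (hn_cont : Continuous fun q : ℝ × ℝ => n q.1 q.2)
    (hp_cont : Continuous fun q : ℝ × ℝ => p q.1 q.2) (hg : Continuous g)
    (hn : ∀ t ∈ U, ∀ x ∈ Icc a b, HasDerivAt (n · x) (F t x * n t x) t)
    (hp : ∀ t ∈ U, ∀ x ∈ Icc a b, HasDerivAt (p · x) (-F t x * p t x + g t) t)
    {t₀ : ℝ} (ht₀ : t₀ ∈ U) :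
    HasDerivAt (fun t => ∫ x in a..b, c x * n t x * p t x)
      ((∫ x in a..b, c x * n t₀ x) * g t₀) t₀ := by
  obtain ⟨c', hc', hcc'⟩ := hc.exists_continuous_eqOn_Icc hab
  have hcongr {f : ℝ → ℝ} : ∫ x in a..b, c' x * f x = ∫ x in a..b, c x * f x :=
    integral_congr fun x hx => by rw [hcc' (uIcc_of_le hab ▸ hx)]
  have hc'n : Continuous fun q : ℝ × ℝ => c' q.2 * n q.1 q.2 :=
    (hc'.comp continuous_snd).mul hn_cont
  have hderiv : ∀ᶠ t in 𝓝 t₀, ∀ x ∈ uIcc a b, HasDerivAt (fun s => c' x * n s x * p s x)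
      (c' x * n t x * g t) t := by
    filter_upwards [hU.mem_nhds ht₀] with t ht x hx
    rw [uIcc_of_le hab] at hx
    exact (((hn t ht x hx).const_mul (c' x)).fun_mul (hp t ht x hx)).congr_deriv (by ring)
  have := hasDerivAt_intervalIntegral_of_continuous (hc'n.mul hp_cont)
    (hc'n.mul (hg.comp continuous_fst)) hderiv
  rw [intervalIntegral.integral_mul_const] at this
  simpa only [mul_assoc, hcongr] using this

theorem eq_mul_exp_neg_integral_of_hasDerivAt {g a : ℝ → ℝ} {s t : ℝ} (hst : s ≤ t)
    (hg : ContinuousOn g (Icc s t)) (ha : Continuous a)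
    (hderiv : ∀ τ ∈ Ioo s t, HasDerivAt g (a τ * g τ) τ) :
    g s = g t * exp (-∫ u in s..t, a u) := by
  set h : ℝ → ℝ := fun τ => g τ * exp (-∫ u in s..τ, a u) with h_def
  have hh : ∀ τ ∈ Ioo s t, HasDerivAt h 0 τ := fun τ hτ =>
    ((hderiv τ hτ).fun_mul (ha.integral_hasStrictDerivAt s τ).hasDerivAt.fun_neg.exp).congr_deriv
      (by ring)
  rcases hst.eq_or_lt with rfl | hlt
  · simp
  obtain ⟨τ, -, hτ⟩ := exists_hasDerivAt_eq_slope h (fun _ => 0) hlt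
    (hg.mul (by fun_prop)) hh
  have hts : h t = h s := by
    rw [eq_comm, div_eq_zero_iff, sub_eq_zero] at hτ
    exact hτ.resolve_right (sub_ne_zero.2 hlt.ne')
  simpa [h_def] using hts.symm

theorem intervalIntegral_mul_eq_of_eqOn_const {a b p₀ : ℝ} (hab : a ≤ b) {c p : ℝ → ℝ}
    (hp : ∀ x ∈ Icc a b, p x = p₀) : ∫ x in a..b, c x * p x = (∫ x in a..b, c x) * p₀ := by
  rw [← intervalIntegral.integral_mul_const]
  exact integral_congr fun x hx => by rw [hp x (uIcc_of_le hab ▸ hx)]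

theorem stmt_7_general (T : ℝ) (hT : 0 < T)
    (n pt : ℝ → ℝ → ℝ) (F : ℝ → ℝ → ℝ) (d : ℝ → ℝ) (g : ℝ → ℝ)
    (p0 : ℝ) (hp0 : p0 < 0)
    (hd : ContinuousOn d (Icc 0 1)) (hdpos : ∀ x ∈ Icc (0:ℝ) 1, 0 < d x)
    (hn_cont : Continuous fun q : ℝ × ℝ => n q.1 q.2)
    (hp_cont : Continuous fun q : ℝ × ℝ => pt q.1 q.2)
    (hg : ∀ t, g t = ∫ x in (0:ℝ)..1, d x * n t x * pt t x)
    (hn : ∀ t ∈ Icc (0:ℝ) T, ∀ x ∈ Icc (0:ℝ) 1,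
      HasDerivAt (fun s => n s x) (F t x * n t x) t)
    (hp : ∀ t ∈ Icc (0:ℝ) T, ∀ x ∈ Icc (0:ℝ) 1,
      HasDerivAt (fun s => pt s x) (-(F t x) * pt t x + g t) t)
    (hnpos : ∀ t ∈ Icc (0:ℝ) T, ∀ x ∈ Icc (0:ℝ) 1, 0 < n t x)
    (hpT : ∀ x ∈ Icc (0:ℝ) 1, pt T x = p0)
    (w : ℝ → ℝ) (hw : ContinuousOn w (Icc 0 1))
    (hwmass : ∀ t ∈ Icc (0:ℝ) T, 0 < ∫ x in (0:ℝ)..1, w x * n t x)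
    (Φ : ℝ → ℝ) (hΦ : ∀ t, Φ t = ∫ x in (0:ℝ)..1, w x * n t x * pt t x) :
    (∀ t ∈ Icc (0:ℝ) T, g t < 0) ∧ StrictAntiOn Φ (Icc 0 T) ∧ Φ T < 0 := by
  have hT_mem : T ∈ Icc 0 T := ⟨hT.le, le_rfl⟩
  have hg_cont : Continuous g := by
    rw [funext hg]
    exact continuous_intervalIntegral_weight_mul_mul zero_le_one hd hn_cont hp_cont
  have hderiv {c : ℝ → ℝ} (hc : ContinuousOn c (Icc 0 1)) {t : ℝ} (ht : t ∈ Ioo 0 T) :=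
    hasDerivAt_intervalIntegral_weight_mul_mul zero_le_one hc isOpen_Ioo hn_cont hp_cont hg_cont
      (fun s hs => hn s (Ioo_subset_Icc_self hs)) (fun s hs => hp s (Ioo_subset_Icc_self hs)) ht
  have hgT : g T < 0 := by
    rw [hg, intervalIntegral_mul_eq_of_eqOn_const zero_le_one hpT]
    refine mul_neg_of_pos_of_neg
      (intervalIntegral_pos_of_pos_on ?_ (fun x hx => ?_) zero_lt_one) hp0
    · exact (hd.mul (hn_cont.comp (Continuous.prodMk_right T)).continuousOn)
        |>.intervalIntegrable_of_Icc zero_le_one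
    · exact mul_pos (hdpos x (Ioo_subset_Icc_self hx)) (hnpos T hT_mem x (Ioo_subset_Icc_self hx))
  have hg_neg : ∀ t ∈ Icc 0 T, g t < 0 := fun t ht => by
    rw [eq_mul_exp_neg_integral_of_hasDerivAt ht.2 hg_cont.continuousOn
      (continuous_intervalIntegral_weight_mul zero_le_one hd hn_cont)
      (fun s hs => by simpa only [← funext hg] using hderiv hd ⟨ht.1.trans_lt hs.1, hs.2⟩)]
    exact mul_neg_of_neg_of_pos hgT (exp_pos _)
  refine ⟨hg_neg, ?_, ?_⟩
  · have hΦ_cont : Continuous Φ := by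
      rw [funext hΦ]
      exact continuous_intervalIntegral_weight_mul_mul zero_le_one hw hn_cont hp_cont
    refine strictAntiOn_of_deriv_neg (convex_Icc 0 T) hΦ_cont.continuousOn fun t ht => ?_
    rw [interior_Icc] at ht
    rw [(by simpa only [← funext hΦ] using hderiv hw ht : HasDerivAt Φ _ t).deriv]
    exact mul_neg_of_pos_of_neg (hwmass t (Ioo_subset_Icc_self ht))
      (hg_neg t (Ioo_subset_Icc_self ht))
  · rw [hΦ, intervalIntegral_mul_eq_of_eqOn_const zero_le_one hpT]
    exact mul_neg_of_pos_of_neg (hwmass T hT_mem) hp0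

/-- With g(t) = ∫₀¹ d n pt dx, n > 0, pt(T,·) = p⁰ < 0, the quantity g is negative on
[0,T] and any weighted switching function with positive weighted mass is strictly
decreasing with negative terminal value. -/
theorem stmt_7 (T : ℝ) (hT : 0 < T)
    (n pt : ℝ → ℝ → ℝ) (F : ℝ → ℝ → ℝ) (d : ℝ → ℝ) (g : ℝ → ℝ)
    (p0 : ℝ) (hp0 : p0 < 0)
    (hF : Continuous fun q : ℝ × ℝ => F q.1 q.2)
    (hd : ContinuousOn d (Icc 0 1)) (hdpos : ∀ x ∈ Icc (0:ℝ) 1, 0 < d x)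
    (hn_cont : Continuous fun q : ℝ × ℝ => n q.1 q.2)
    (hp_cont : Continuous fun q : ℝ × ℝ => pt q.1 q.2)
    (hg : ∀ t, g t = ∫ x in (0:ℝ)..1, d x * n t x * pt t x)
    (hn : ∀ t ∈ Icc (0:ℝ) T, ∀ x ∈ Icc (0:ℝ) 1,
      HasDerivAt (fun s => n s x) (F t x * n t x) t)
    (hp : ∀ t ∈ Icc (0:ℝ) T, ∀ x ∈ Icc (0:ℝ) 1,
      HasDerivAt (fun s => pt s x) (-(F t x) * pt t x + g t) t)
    (hnpos : ∀ t ∈ Icc (0:ℝ) T, ∀ x ∈ Icc (0:ℝ) 1, 0 < n t x)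
    (hpT : ∀ x ∈ Icc (0:ℝ) 1, pt T x = p0)
    (w : ℝ → ℝ) (hw : ContinuousOn w (Icc 0 1))
    (hwnn : ∀ x ∈ Icc (0:ℝ) 1, 0 ≤ w x)
    (hwmass : ∀ t ∈ Icc (0:ℝ) T, 0 < ∫ x in (0:ℝ)..1, w x * n t x)
    (Φ : ℝ → ℝ) (hΦ : ∀ t, Φ t = ∫ x in (0:ℝ)..1, w x * n t x * pt t x) :
    (∀ t ∈ Icc (0:ℝ) T, g t < 0) ∧ StrictAntiOn Φ (Icc 0 T) ∧ Φ T < 0 :=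
  stmt_7_general T hT n pt F d g p0 hp0 hd hdpos hn_cont hp_cont hg hn hp hnpos hpT w hw hwmass Φ hΦ
end

section
/- Let ρ solve ρ'(t) = (r − d·ρ(t))·ρ(t) − μ·u(t)·ρ(t) on [0,T] with ρ(0) = ρ₀ > 0, constants r, d, μ > 0, and measurable u with 0 ≤ u ≤ u_max. Among all admissible controls with fixed total dose ∫₀ᵀ u(t) dt = D, the terminal value satisfies the explicit lower bound ρ(T) ≥ ρ₀·e^{rT−μD}/(1 + ρ₀·d·(e^{rT} − 1)/r) — in particular ρ(T) > 0, so no dosing schedule with finite total dose D can eradicate the population by time T. -/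
/-!
Along a positive solution of `ρ' = g ρ` one has `ρ T = ρ 0 · exp (∫₀ᵀ g)`. Hence
`ρ T = ρ₀ exp (r T - d ∫₀ᵀ ρ - μ D)`, while the uncontrolled logistic solution `ψ` (the right-hand
side of the bound without the factor `e^{-μD}`) satisfies `ψ T = ρ₀ exp (r T - d ∫₀ᵀ ψ)`.
The control only lowers the growth rate, so `ρ ≤ ψ`: in terms of `σ = 1/ρ` this is
`σ' ≥ d - r σ`, i.e. `e^{rt} (σ - d/r)` is nondecreasing. Thus `∫ρ ≤ ∫ψ` and
`ρ T ≥ ψ T e^{-μD}`. Positivity of `ρ` is uniqueness for a linear ODE with bounded coefficient: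
a solution vanishing at some time vanishes at time `0`.
-/

open Set MeasureTheory intervalIntegral Real

section LinearODE

variable {f g : ℝ → ℝ} {a b : ℝ}

theorem pos_of_hasDerivAt_mul_self {K : ℝ} (hf : ∀ t ∈ Icc a b, HasDerivAt f (g t * f t) t)
    (hg : ∀ t ∈ Icc a b, |g t| ≤ K) (ha : 0 < f a) : ∀ t ∈ Icc a b, 0 < f t := by
  intro t ht
  by_contra! hft
  have hcont : ContinuousOn f (Icc a b) := fun s hs => (hf s hs).continuousAt.continuousWithinAt
  obtain ⟨t₀, ht₀, hzero⟩ : ∃ t₀ ∈ Icc a t, f t₀ = 0 :=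
    intermediate_value_Icc' ht.1 (hcont.mono (Icc_subset_Icc_right ht.2)) ⟨hft, ha.le⟩
  have hsub : Icc a t₀ ⊆ Icc a b := Icc_subset_Icc_right (ht₀.2.trans ht.2)
  have hlip : ∀ s ∈ Ioc a t₀, LipschitzOnWith K.toNNReal (g s * ·) univ := fun s hs =>
    ((lipschitzWith_smul (g s)).weaken (by
      simpa [← NNReal.coe_le_coe] using
        Or.inl (hg s (hsub (Ioc_subset_Icc_self hs))))).lipschitzOnWith
  have hvanish := ODE_solution_unique_of_mem_Icc_left (g := fun _ => 0) hlip (hcont.mono hsub)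
    (fun s hs => (hf s (hsub (Ioc_subset_Icc_self hs))).hasDerivWithinAt) (fun _ _ => mem_univ _)
    continuousOn_const (fun s _ => by simpa using (hasDerivWithinAt_const s _ (0 : ℝ)))
    (fun _ _ => mem_univ _) hzero
  exact ha.ne' (hvanish ⟨le_rfl, ht₀.1⟩)

theorem eq_mul_exp_integral_of_hasDerivAt_mul (hab : a ≤ b)
    (hf : ∀ t ∈ Icc a b, HasDerivAt f (g t * f t) t) (hpos : ∀ t ∈ Icc a b, 0 < f t)
    (hg : IntervalIntegrable g volume a b) : f b = f a * exp (∫ t in a..b, g t) := by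
  have hlog : ∫ t in a..b, g t = log (f b) - log (f a) := by
    refine integral_eq_sub_of_hasDerivAt (f := fun t => log (f t)) (fun t ht => ?_) hg
    rw [uIcc_of_le hab] at ht
    exact ((hf t ht).log (hpos t ht).ne').congr_deriv (by field_simp [(hpos t ht).ne'])
  rw [hlog, exp_sub, exp_log (hpos b ⟨hab, le_rfl⟩), exp_log (hpos a ⟨le_rfl, hab⟩)]
  field_simp [(hpos a ⟨le_rfl, hab⟩).ne']

end LinearODE

section Logistic

variable {r d ρ₀ T : ℝ}

theorem hasDerivAt_exp_mul (r t : ℝ) : HasDerivAt (fun s => exp (r * s)) (exp (r * t) * r) t := by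
  simpa using ((hasDerivAt_id t).const_mul r).exp

noncomputable def logisticSolution (r d ρ₀ t : ℝ) : ℝ :=
  ρ₀ * exp (r * t) / (1 + ρ₀ * d * (exp (r * t) - 1) / r)

@[simp]
theorem logisticSolution_zero : logisticSolution r d ρ₀ 0 = ρ₀ := by
  simp [logisticSolution]

theorem logistic_denominator_pos (hr : 0 < r) (hd : 0 ≤ d) (hρ₀ : 0 ≤ ρ₀) {t : ℝ} (ht : 0 ≤ t) :
    0 < 1 + ρ₀ * d * (exp (r * t) - 1) / r := by
  have : 0 ≤ exp (r * t) - 1 := sub_nonneg.2 (one_le_exp (mul_nonneg hr.le ht))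
  positivity

theorem logisticSolution_pos (hr : 0 < r) (hd : 0 ≤ d) (hρ₀ : 0 < ρ₀) {t : ℝ} (ht : 0 ≤ t) :
    0 < logisticSolution r d ρ₀ t :=
  div_pos (by positivity) (logistic_denominator_pos hr hd hρ₀.le ht)

theorem hasDerivAt_logisticSolution (hr : 0 < r) (hd : 0 ≤ d) (hρ₀ : 0 ≤ ρ₀) {t : ℝ}
    (ht : 0 ≤ t) : HasDerivAt (logisticSolution r d ρ₀)
      ((r - d * logisticSolution r d ρ₀ t) * logisticSolution r d ρ₀ t) t := by
  have hE := hasDerivAt_exp_mul r t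
  have hQ := logistic_denominator_pos hr hd hρ₀ ht
  have hQr : r + ρ₀ * d * (exp (r * t) - 1) ≠ 0 := by
    have := mul_pos hQ hr
    rw [add_mul, one_mul, div_mul_cancel₀ _ hr.ne'] at this
    exact this.ne'
  refine ((hE.const_mul ρ₀).div (((hE.sub_const 1).const_mul (ρ₀ * d)).div_const r |>.const_add 1)
    hQ.ne').congr_deriv ?_
  unfold logisticSolution
  field_simp

theorem le_logisticSolution (hr : 0 < r) (hd : 0 ≤ d) {ρ ρ' : ℝ → ℝ}
    (hpos : ∀ t ∈ Icc 0 T, 0 < ρ t) (hρ : ∀ t ∈ Icc 0 T, HasDerivAt ρ (ρ' t) t)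
    (hle : ∀ t ∈ Icc 0 T, ρ' t ≤ (r - d * ρ t) * ρ t) :
    ∀ t ∈ Icc 0 T, ρ t ≤ logisticSolution r d (ρ 0) t := by
  set F : ℝ → ℝ := fun t => exp (r * t) * ((ρ t)⁻¹ - d / r)
  have hF : ∀ t ∈ Icc 0 T,
      HasDerivAt F (exp (r * t) * (r * ((ρ t)⁻¹ - d / r) - ρ' t / ρ t ^ 2)) t := fun t ht =>
    ((hasDerivAt_exp_mul r t).mul (((hρ t ht).inv (hpos t ht).ne').sub_const (d / r))).congr_deriv
      (by rw [Pi.inv_apply]; ring)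
  have hF' : ∀ t ∈ Icc 0 T, ρ' t / ρ t ^ 2 ≤ r * ((ρ t)⁻¹ - d / r) := fun t ht =>
    calc ρ' t / ρ t ^ 2 ≤ (r - d * ρ t) * ρ t / ρ t ^ 2 :=
          div_le_div_of_nonneg_right (hle t ht) (sq_nonneg _)
      _ = r * ((ρ t)⁻¹ - d / r) := by field_simp [(hpos t ht).ne']
  have hmono : MonotoneOn F (Icc 0 T) :=
    monotoneOn_of_hasDerivWithinAt_nonneg (convex_Icc 0 T)
      (fun t ht => (hF t ht).continuousAt.continuousWithinAt)
      (fun t ht => (hF t (interior_subset ht)).hasDerivWithinAt)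
      (fun t ht => mul_nonneg (exp_pos _).le (sub_nonneg.2 (hF' t (interior_subset ht))))
  intro t ht
  have h0 : (0 : ℝ) ∈ Icc 0 T := ⟨le_rfl, ht.1.trans ht.2⟩
  have hFt : (ρ 0)⁻¹ - d / r ≤ exp (r * t) * ((ρ t)⁻¹ - d / r) := by
    simpa [F] using hmono h0 ht ht.1
  have hρ0 := hpos 0 h0
  have hρt := hpos t ht
  rw [logisticSolution, le_div_iff₀ (logistic_denominator_pos hr hd hρ0.le ht.1)]
  have := mul_le_mul_of_nonneg_left hFt (mul_pos hρ0 hρt).le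
  field_simp at this
  field_simp
  linear_combination this

theorem eq_mul_exp_of_hasDerivAt_logistic {f c : ℝ → ℝ} (hT : 0 ≤ T)
    (hf : ∀ t ∈ Icc 0 T, HasDerivAt f ((r - d * f t - c t) * f t) t)
    (hpos : ∀ t ∈ Icc 0 T, 0 < f t) (hc : IntervalIntegrable c volume 0 T) :
    f T = f 0 * exp (r * T - d * (∫ t in 0..T, f t) - ∫ t in 0..T, c t) := by
  have hf_int : IntervalIntegrable f volume 0 T :=
    ContinuousOn.intervalIntegrable_of_Icc hT fun t ht => (hf t ht).continuousAt.continuousWithinAt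
  rw [eq_mul_exp_integral_of_hasDerivAt_mul hT hf hpos
    ((intervalIntegrable_const.sub (hf_int.const_mul d)).sub hc), integral_sub
    (intervalIntegrable_const.sub (hf_int.const_mul d)) hc, integral_sub intervalIntegrable_const
    (hf_int.const_mul d), intervalIntegral.integral_const, intervalIntegral.integral_const_mul,
    smul_eq_mul, sub_zero, mul_comm T]

theorem logisticSolution_eq_mul_exp_integral (hr : 0 < r) (hd : 0 ≤ d) (hρ₀ : 0 < ρ₀)
    (hT : 0 ≤ T) : logisticSolution r d ρ₀ T =
      ρ₀ * exp (r * T - d * ∫ t in 0..T, logisticSolution r d ρ₀ t) := by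
  have h := eq_mul_exp_of_hasDerivAt_logistic (c := 0) hT
    (fun t ht => by simpa using hasDerivAt_logisticSolution hr hd hρ₀.le ht.1)
    (fun t ht => logisticSolution_pos hr hd hρ₀ ht.1) intervalIntegrable_const
  simpa using h

end Logistic

theorem intervalIntegrable_of_abs_le {u : ℝ → ℝ} {a b M : ℝ} (hab : a ≤ b)
    (hu : AEStronglyMeasurable u) (hbd : ∀ t ∈ Icc a b, |u t| ≤ M) :
    IntervalIntegrable u volume a b := by
  rw [intervalIntegrable_iff_integrableOn_Icc_of_le hab]
  refine Measure.integrableOn_of_bounded (M := M) measure_Icc_lt_top.ne hu ?_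
  filter_upwards [ae_restrict_mem measurableSet_Icc] with t ht
  exact hbd t ht

theorem exists_abs_sub_mul_sub_mul_le {r d μ M T : ℝ} {ρ u : ℝ → ℝ}
    (hρ : ContinuousOn ρ (Icc 0 T)) (hu : ∀ t ∈ Icc 0 T, |u t| ≤ M) :
    ∃ K, ∀ t ∈ Icc 0 T, |r - d * ρ t - μ * u t| ≤ K := by
  obtain ⟨C, hC⟩ :=
    isCompact_Icc.exists_bound_of_continuousOn (continuousOn_const.sub (hρ.const_smul d))
  refine ⟨C + |μ| * M, fun t ht => ?_⟩
  calc |r - d * ρ t - μ * u t| ≤ |r - d * ρ t| + |μ| * |u t| := abs_mul μ (u t) ▸ abs_sub _ _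
    _ ≤ C + |μ| * M := add_le_add (hC t ht) (mul_le_mul_of_nonneg_left (hu t ht) (abs_nonneg μ))

theorem stmt_18_general (T r d μc u_max D ρ₀ : ℝ)
    (hT : 0 < T) (hr : 0 < r) (hd : 0 < d) (hμc : 0 < μc)
    (hρ₀ : 0 < ρ₀)
    (u ρ : ℝ → ℝ) (hu_meas : Measurable u)
    (hu_range : ∀ t ∈ Icc (0:ℝ) T, u t ∈ Icc 0 u_max)
    (hdose : (∫ t in (0:ℝ)..T, u t) = D)
    (hρ0 : ρ 0 = ρ₀)
    (hode : ∀ t ∈ Icc (0:ℝ) T,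
      HasDerivAt ρ ((r - d * ρ t) * ρ t - μc * u t * ρ t) t) :
    ρ T ≥ ρ₀ * Real.exp (r * T - μc * D)
        / (1 + ρ₀ * d * (Real.exp (r * T) - 1) / r) ∧ 0 < ρ T := by
  have hT0 : (0 : ℝ) ≤ T := hT.le
  have hu_bd : ∀ t ∈ Icc (0 : ℝ) T, |u t| ≤ u_max :=
    fun t ht => (abs_of_nonneg (hu_range t ht).1).trans_le (hu_range t ht).2
  have hρ' : ∀ t ∈ Icc (0 : ℝ) T, HasDerivAt ρ ((r - d * ρ t - μc * u t) * ρ t) t :=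
    fun t ht => (hode t ht).congr_deriv (by ring)
  have hρ_cont : ContinuousOn ρ (Icc 0 T) := fun t ht => (hode t ht).continuousAt.continuousWithinAt
  obtain ⟨K, hK⟩ := exists_abs_sub_mul_sub_mul_le (r := r) (d := d) (μ := μc) hρ_cont hu_bd
  have hpos := pos_of_hasDerivAt_mul_self hρ' hK (hρ0 ▸ hρ₀)
  have hle : ∀ t ∈ Icc (0 : ℝ) T, ρ t ≤ logisticSolution r d ρ₀ t :=
    hρ0 ▸ le_logisticSolution hr hd.le hpos hode fun t ht =>
      sub_le_self _ (mul_nonneg (mul_nonneg hμc.le (hu_range t ht).1) (hpos t ht).le)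
  have hρT := eq_mul_exp_of_hasDerivAt_logistic hT0 hρ' hpos
    ((intervalIntegrable_of_abs_le hT0 hu_meas.aestronglyMeasurable hu_bd).const_mul μc)
  rw [intervalIntegral.integral_const_mul, hdose, hρ0] at hρT
  have hint : ∫ t in (0 : ℝ)..T, ρ t ≤ ∫ t in (0 : ℝ)..T, logisticSolution r d ρ₀ t :=
    integral_mono_on hT0 (hρ_cont.intervalIntegrable_of_Icc hT0)
      (ContinuousOn.intervalIntegrable_of_Icc hT0 fun t ht =>
        (hasDerivAt_logisticSolution hr hd.le hρ₀.le ht.1).continuousAt.continuousWithinAt) hle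
  refine ⟨?_, hpos T ⟨hT0, le_rfl⟩⟩
  calc ρ₀ * exp (r * T - μc * D) / (1 + ρ₀ * d * (exp (r * T) - 1) / r)
      = logisticSolution r d ρ₀ T * exp (-(μc * D)) := by
        simp only [logisticSolution, sub_eq_add_neg, exp_add]; ring
    _ = ρ₀ * exp (r * T - d * (∫ t in (0 : ℝ)..T, logisticSolution r d ρ₀ t) - μc * D) := by
      rw [logisticSolution_eq_mul_exp_integral hr hd.le hρ₀ hT0, mul_assoc, ← exp_add,
        ← sub_eq_add_neg]
    _ ≤ ρ₀ * exp (r * T - d * (∫ t in (0 : ℝ)..T, ρ t) - μc * D) := by gcongr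
    _ = ρ T := hρT.symm

/-- Quantitative non-eradication for the controlled logistic equation: with total dose
∫₀ᵀ u = D, one has ρ(T) ≥ ρ₀ e^{rT−μD}/(1 + ρ₀ d (e^{rT}−1)/r) > 0. -/
theorem stmt_18 (T r d μc u_max D ρ₀ : ℝ)
    (hT : 0 < T) (hr : 0 < r) (hd : 0 < d) (hμc : 0 < μc)
    (hu_max : 0 < u_max) (hρ₀ : 0 < ρ₀)
    (u ρ : ℝ → ℝ) (hu_meas : Measurable u)
    (hu_range : ∀ t ∈ Icc (0:ℝ) T, u t ∈ Icc 0 u_max)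
    (hdose : (∫ t in (0:ℝ)..T, u t) = D)
    (hρ0 : ρ 0 = ρ₀)
    (hode : ∀ t ∈ Icc (0:ℝ) T,
      HasDerivAt ρ ((r - d * ρ t) * ρ t - μc * u t * ρ t) t) :
    ρ T ≥ ρ₀ * Real.exp (r * T - μc * D)
        / (1 + ρ₀ * d * (Real.exp (r * T) - 1) / r) ∧ 0 < ρ T :=
  stmt_18_general T r d μc u_max D ρ₀ hT hr hd hμc hρ₀ u ρ hu_meas hu_range hdose hρ0 hode
end
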